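/- arXiv:1711.01335 — 5 statements merged into one kernel-verified Lean document; each statement's English description precedes it below -/
import Mathlib

section
/- Let y : Fin n → ℝ with values in [0,1], mean m = (∑ y_j)/n, and y' obtained by changing one coordinate (still in [0,1]) with mean m'. Then |∑_j (y_j - m)^2 - ∑_j (y'_j - m')^2| ≤ 1 + 2 + 1/n, i.e., the within-group sum of squared errors of a single group has sensitivity at most 3 + 1/n ≤ 4 when the changed point stays in the group. -/
/-! Writing the SSE as `∑ z j ^ 2 - n m ^ 2` and using `n (m - m') = a - b`, replacing one
value `a` by `b` changes the SSE by exactly `(a - b) ((a - m) + (b - m'))`, where `m`, `m'` are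
the old and new means. Since `a`, `b`, `m`, `m'` all lie in `[0, 1]`, the change is at most `2`
in absolute value, already below `3 + 1 / n`. -/

open Finset

variable {ι : Type*}

noncomputable def sse (s : Finset ι) (f : ι → ℝ) : ℝ :=
  ∑ i ∈ s, (f i - (∑ j ∈ s, f j) / #s) ^ 2

theorem sse_eq_sum_sq_sub (s : Finset ι) (f : ι → ℝ) :
    sse s f = ∑ i ∈ s, f i ^ 2 - #s * ((∑ j ∈ s, f j) / #s) ^ 2 := by
  rcases s.eq_empty_or_nonempty with rfl | hs
  · simp [sse]
  have hcard : (#s : ℝ) ≠ 0 := by exact_mod_cast hs.card_ne_zero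
  set m := (∑ j ∈ s, f j) / #s
  have hsum : ∑ j ∈ s, f j = #s * m := by simp only [m]; field_simp
  calc sse s f = ∑ i ∈ s, (f i ^ 2 - 2 * m * f i + m ^ 2) := by
        refine sum_congr rfl fun i _ => ?_
        ring
    _ = ∑ i ∈ s, f i ^ 2 - #s * m ^ 2 := by
        rw [sum_add_distrib, sum_sub_distrib, ← mul_sum, hsum, sum_const, nsmul_eq_mul]
        ring

theorem sum_div_card_mem_Icc {s : Finset ι} {f : ι → ℝ} (hf : ∀ i ∈ s, f i ∈ Set.Icc 0 1) :
    (∑ j ∈ s, f j) / #s ∈ Set.Icc 0 1 := by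
  have hsum : ∑ j ∈ s, f j ≤ #s := by
    simpa using sum_le_sum fun i hi => (hf i hi).2
  exact ⟨div_nonneg (sum_nonneg fun i hi => (hf i hi).1) (Nat.cast_nonneg _),
    div_le_one_of_le₀ hsum (Nat.cast_nonneg _)⟩

theorem sum_sub_sum_eq_of_eq_off {s : Finset ι} {f g : ι → ℝ} {i : ι} (hi : i ∈ s)
    (hfg : ∀ j ∈ s, j ≠ i → f j = g j) :
    ∑ j ∈ s, f j - ∑ j ∈ s, g j = f i - g i := by
  rw [← sum_sub_distrib, sum_eq_single_of_mem i hi]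
  intro j hj hji
  rw [hfg j hj hji, sub_self]

theorem sse_sub_sse_eq_of_eq_off {s : Finset ι} {f g : ι → ℝ} {i : ι} (hi : i ∈ s)
    (hfg : ∀ j ∈ s, j ≠ i → f j = g j) :
    sse s f - sse s g = (f i - g i) *
      ((f i - (∑ j ∈ s, f j) / #s) + (g i - (∑ j ∈ s, g j) / #s)) := by
  have hcard : (#s : ℝ) ≠ 0 := by exact_mod_cast (ne_of_gt (card_pos.2 ⟨i, hi⟩))
  have hsq : ∑ j ∈ s, f j ^ 2 - ∑ j ∈ s, g j ^ 2 = f i ^ 2 - g i ^ 2 :=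
    sum_sub_sum_eq_of_eq_off (f := fun j => f j ^ 2) hi fun j hj hji => by rw [hfg j hj hji]
  have hmean : (#s : ℝ) * ((∑ j ∈ s, f j) / #s - (∑ j ∈ s, g j) / #s) = f i - g i := by
    rw [← sub_div, mul_div_cancel₀ _ hcard, sum_sub_sum_eq_of_eq_off hi hfg]
  rw [sse_eq_sum_sq_sub, sse_eq_sum_sq_sub]
  linear_combination hsq - ((∑ j ∈ s, f j) / #s + (∑ j ∈ s, g j) / #s) * hmean

theorem abs_sse_sub_sse_le_two {s : Finset ι} {f g : ι → ℝ} {i : ι} (hi : i ∈ s)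
    (hf : ∀ j ∈ s, f j ∈ Set.Icc 0 1) (hg : ∀ j ∈ s, g j ∈ Set.Icc 0 1)
    (hfg : ∀ j ∈ s, j ≠ i → f j = g j) :
    |sse s f - sse s g| ≤ 2 := by
  obtain ⟨hm₀, hm₁⟩ := sum_div_card_mem_Icc hf
  obtain ⟨hm₀', hm₁'⟩ := sum_div_card_mem_Icc hg
  obtain ⟨hfi₀, hfi₁⟩ := hf i hi
  obtain ⟨hgi₀, hgi₁⟩ := hg i hi
  rw [sse_sub_sse_eq_of_eq_off hi hfg, abs_mul]
  calc |f i - g i| * |(f i - (∑ j ∈ s, f j) / #s) + (g i - (∑ j ∈ s, g j) / #s)|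
      ≤ 1 * (1 + 1) := by
        gcongr
        · exact abs_sub_le_of_nonneg_of_le hfi₀ hfi₁ hgi₀ hgi₁
        · exact (abs_add_le _ _).trans (add_le_add
            (abs_sub_le_of_nonneg_of_le hfi₀ hfi₁ hm₀ hm₁)
            (abs_sub_le_of_nonneg_of_le hgi₀ hgi₁ hm₀' hm₁'))
    _ = 2 := by norm_num

theorem single_group_sse_sensitivity_general {n : ℕ} (y y' : Fin n → ℝ)
    (hy : ∀ j, y j ∈ Set.Icc (0 : ℝ) 1) (hy' : ∀ j, y' j ∈ Set.Icc (0 : ℝ) 1)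
    (hneighbor : ∃ i, y i ≠ y' i ∧ ∀ j, j ≠ i → y j = y' j) :
    |(∑ j, (y j - (∑ j, y j) / n) ^ 2) - ∑ j, (y' j - (∑ j, y' j) / n) ^ 2| ≤ 1 + 2 + 1 / n := by
  obtain ⟨i, -, hoff⟩ := hneighbor
  have h := abs_sse_sub_sse_le_two (mem_univ i) (fun j _ => hy j) (fun j _ => hy' j)
    fun j _ hji => hoff j hji
  simp only [sse, card_univ, Fintype.card_fin] at h
  have : (0 : ℝ) ≤ 1 / n := by positivity
  linarith

theorem single_group_sse_sensitivity {n : ℕ} (hn : 1 ≤ n) (y y' : Fin n → ℝ)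
    (hy : ∀ j, y j ∈ Set.Icc (0 : ℝ) 1) (hy' : ∀ j, y' j ∈ Set.Icc (0 : ℝ) 1)
    (hneighbor : ∃ i, y i ≠ y' i ∧ ∀ j, j ≠ i → y j = y' j) :
    |(∑ j, (y j - (∑ j, y j) / n) ^ 2) - ∑ j, (y' j - (∑ j, y' j) / n) ^ 2| ≤ 1 + 2 + 1 / n :=
  single_group_sse_sensitivity_general y y' hy hy' hneighbor
end

section
/- Consider a database D of n rows, each row consisting of a group label in Fin k and a value in [0,1]. Define SSE(D) = ∑_{i=1}^k ∑_{j=1}^{n_i} (y_{ij} - ȳ_i)^2 where ȳ_i is the mean of group i and n_i its size. Then for any two neighboring databases D, D' (differing in exactly one row, possibly changing both its group and value), |SSE(D) - SSE(D')| ≤ 7. -/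
open Finset

noncomputable def groupSize {n k : ℕ} (D : Fin n → Fin k × ℝ) (i : Fin k) : ℕ :=
  (Finset.univ.filter (fun j => (D j).1 = i)).card

noncomputable def groupMean {n k : ℕ} (D : Fin n → Fin k × ℝ) (i : Fin k) : ℝ :=
  (∑ j ∈ Finset.univ.filter (fun j => (D j).1 = i), (D j).2) / (groupSize D i)

noncomputable def grandMean {n k : ℕ} (D : Fin n → Fin k × ℝ) : ℝ :=
  (∑ j, (D j).2) / n

noncomputable def SSE {n k : ℕ} (D : Fin n → Fin k × ℝ) : ℝ :=
  ∑ i, ∑ j ∈ Finset.univ.filter (fun j => (D j).1 = i), ((D j).2 - groupMean D i) ^ 2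

noncomputable def SSA {n k : ℕ} (D : Fin n → Fin k × ℝ) : ℝ :=
  ∑ i, (groupSize D i : ℝ) * (groupMean D i - grandMean D) ^ 2

/-- Neighboring databases: differ in exactly one row. -/
def Neighboring {n k : ℕ} (D D' : Fin n → Fin k × ℝ) : Prop :=
  ∃ r, ∀ j, j ≠ r → D j = D' j

/-!
Within a group, the mean minimises the sum of squared deviations from a constant. Hence adding
a value `y` to a group never decreases that sum and increases it by at most `(y - m)²`, where `m`
is the old mean; for values in `[0, 1]` this is at most `1`. Deleting the changed row from `D`
and from `D'` leaves the same data, whose `SSE` lies within `1` below both `SSE D` and `SSE D'`,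
so these differ by at most `1`.
-/

open scoped BigOperators

section SumSqDev

variable {ι : Type*}

noncomputable def sumSqDev (s : Finset ι) (g : ι → ℝ) : ℝ :=
  ∑ j ∈ s, (g j - 𝔼 i ∈ s, g i) ^ 2

lemma sumSqDev_congr {s : Finset ι} {g g' : ι → ℝ} (h : ∀ j ∈ s, g j = g' j) :
    sumSqDev s g = sumSqDev s g' := by
  unfold sumSqDev
  rw [expect_congr rfl h]
  exact sum_congr rfl fun j hj => by rw [h j hj]

lemma sum_sub_expect_eq_zero (s : Finset ι) (g : ι → ℝ) : ∑ j ∈ s, (g j - 𝔼 i ∈ s, g i) = 0 := by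
  rw [sum_sub_distrib, sum_const, nsmul_eq_mul, card_mul_expect, sub_self]

lemma sum_sq_sub_eq_sumSqDev_add (s : Finset ι) (g : ι → ℝ) (c : ℝ) :
    ∑ j ∈ s, (g j - c) ^ 2 = sumSqDev s g + #s * (𝔼 i ∈ s, g i - c) ^ 2 := by
  set m := 𝔼 i ∈ s, g i
  have hsplit : ∀ j ∈ s, (g j - c) ^ 2 = (g j - m) ^ 2 + 2 * (m - c) * (g j - m) + (m - c) ^ 2 :=
    fun j _ => by ring
  rw [sum_congr rfl hsplit, sum_add_distrib, sum_add_distrib, ← mul_sum, sum_sub_expect_eq_zero,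
    sum_const, nsmul_eq_mul, sumSqDev, mul_zero, add_zero]

lemma sumSqDev_le_sum_sq_sub (s : Finset ι) (g : ι → ℝ) (c : ℝ) :
    sumSqDev s g ≤ ∑ j ∈ s, (g j - c) ^ 2 := by
  rw [sum_sq_sub_eq_sumSqDev_add]
  exact le_add_of_nonneg_right (by positivity)

variable [DecidableEq ι] {s : Finset ι} {a : ι}

lemma sumSqDev_le_sumSqDev_insert (g : ι → ℝ) (ha : a ∉ s) :
    sumSqDev s g ≤ sumSqDev (insert a s) g :=
  calc sumSqDev s g ≤ ∑ j ∈ s, (g j - 𝔼 i ∈ insert a s, g i) ^ 2 := sumSqDev_le_sum_sq_sub _ _ _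
    _ ≤ sumSqDev (insert a s) g := by
      rw [sumSqDev, sum_insert ha]
      exact le_add_of_nonneg_left (sq_nonneg _)

lemma sumSqDev_insert_le (g : ι → ℝ) (ha : a ∉ s) :
    sumSqDev (insert a s) g ≤ sumSqDev s g + (g a - 𝔼 i ∈ s, g i) ^ 2 :=
  calc sumSqDev (insert a s) g ≤ ∑ j ∈ insert a s, (g j - 𝔼 i ∈ s, g i) ^ 2 :=
        sumSqDev_le_sum_sq_sub _ _ _
    _ = sumSqDev s g + (g a - 𝔼 i ∈ s, g i) ^ 2 := by rw [sum_insert ha, sumSqDev, add_comm]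

lemma sumSqDev_insert_sub_mem_Icc {g : ι → ℝ} (hg : ∀ j ∈ insert a s, g j ∈ Set.Icc (0 : ℝ) 1)
    (ha : a ∉ s) : sumSqDev (insert a s) g - sumSqDev s g ∈ Set.Icc (0 : ℝ) 1 := by
  have hmean : 𝔼 i ∈ s, g i ∈ Set.Icc (0 : ℝ) 1 := by
    rcases s.eq_empty_or_nonempty with rfl | hs
    · simp -- `𝔼` over `∅` is `0`
    · exact ⟨expect_nonneg fun j hj => (hg j (mem_insert_of_mem hj)).1,
        expect_le hs fun j hj => (hg j (mem_insert_of_mem hj)).2⟩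
  have hga := hg a (mem_insert_self a s)
  have hdev : (g a - 𝔼 i ∈ s, g i) ^ 2 ≤ 1 := by
    rw [sq_le_one_iff_abs_le_one, abs_le]
    constructor <;> linarith [hmean.1, hmean.2, hga.1, hga.2]
  constructor
  · linarith [sumSqDev_le_sumSqDev_insert g ha]
  · linarith [sumSqDev_insert_le g ha]

end SumSqDev

section Database

variable {n k : ℕ}

def groupRows (D : Fin n → Fin k × ℝ) (i : Fin k) : Finset (Fin n) :=
  univ.filter fun j => (D j).1 = i

lemma SSE_eq_sum_sumSqDev (D : Fin n → Fin k × ℝ) :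
    SSE D = ∑ i, sumSqDev (groupRows D i) (fun j => (D j).2) := by
  refine sum_congr rfl fun i _ => ?_
  rw [sumSqDev, expect_eq_sum_div_card]
  rfl

lemma SSE_sub_sum_sumSqDev_erase_mem_Icc (D : Fin n → Fin k × ℝ)
    (hD : ∀ j, (D j).2 ∈ Set.Icc (0 : ℝ) 1) (r : Fin n) :
    SSE D - ∑ i, sumSqDev ((groupRows D i).erase r) (fun j => (D j).2) ∈ Set.Icc (0 : ℝ) 1 := by
  have hr : r ∈ groupRows D (D r).1 := by simp [groupRows]
  rw [SSE_eq_sum_sumSqDev, ← sum_sub_distrib, sum_eq_single (D r).1]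
  · have h := sumSqDev_insert_sub_mem_Icc (fun j _ => hD j) (notMem_erase r (groupRows D (D r).1))
    rwa [insert_erase hr] at h
  · intro i _ hi
    rw [erase_eq_of_notMem (by simpa [groupRows] using Ne.symm hi), sub_self]
  · simp

lemma sum_sumSqDev_erase_eq_of_forall_ne {D D' : Fin n → Fin k × ℝ} {r : Fin n}
    (hr : ∀ j, j ≠ r → D j = D' j) :
    ∑ i, sumSqDev ((groupRows D i).erase r) (fun j => (D j).2)
      = ∑ i, sumSqDev ((groupRows D' i).erase r) (fun j => (D' j).2) := by
  have hrows : ∀ i, (groupRows D i).erase r = (groupRows D' i).erase r := fun i => by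
    ext j
    simp only [groupRows, mem_erase, mem_filter, mem_univ, true_and, and_congr_right_iff]
    exact fun hj => by rw [hr j hj]
  refine sum_congr rfl fun i _ => ?_
  rw [hrows]
  exact sumSqDev_congr fun j hj => by rw [hr j (ne_of_mem_erase hj)]

theorem abs_SSE_sub_SSE_le_one {D D' : Fin n → Fin k × ℝ}
    (hD : ∀ j, (D j).2 ∈ Set.Icc (0 : ℝ) 1) (hD' : ∀ j, (D' j).2 ∈ Set.Icc (0 : ℝ) 1)
    (hneighbor : Neighboring D D') : |SSE D - SSE D'| ≤ 1 := by
  obtain ⟨r, hr⟩ := hneighbor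
  have h := SSE_sub_sum_sumSqDev_erase_mem_Icc D hD r
  have h' := SSE_sub_sum_sumSqDev_erase_mem_Icc D' hD' r
  rw [← sum_sumSqDev_erase_eq_of_forall_ne hr] at h'
  rw [abs_le]
  constructor <;> linarith [h.1, h.2, h'.1, h'.2]

end Database

theorem SSE_sensitivity {n k : ℕ} (D D' : Fin n → Fin k × ℝ)
    (hD : ∀ j, (D j).2 ∈ Set.Icc (0 : ℝ) 1) (hD' : ∀ j, (D' j).2 ∈ Set.Icc (0 : ℝ) 1)
    (hneighbor : Neighboring D D') :
    |SSE D - SSE D'| ≤ 7 :=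
  (abs_SSE_sub_SSE_le_one hD hD' hneighbor).trans (by norm_num)
end

section
/- With the same database setup, define SSA(D) = ∑_{i=1}^k n_i (ȳ_i - ȳ)^2 where ȳ is the grand mean of all n values. Then for any two neighboring databases D and D' on n rows, |SSA(D) - SSA(D')| ≤ 9 + 5/n. -/
/-!
Write `SSA = ∑ᵢ Sᵢ² / nᵢ - S² / n` with `Sᵢ`, `S` the group and grand sums. Adding a row of value
`x ∈ [0, 1]` to a set of `m` rows with sum `S` changes `S² / m` by exactly
`x² - (S - m x)² / (m (m + 1)) ∈ [x² - 1, x²]`, once for the row's group and once for the grand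
total, so it changes `SSA` by at most `1`. Two neighboring databases share the database with the
differing row removed, hence `|SSA D - SSA D'| ≤ 2`.
-/

open Finset

lemma sq_div_succ_sub_sq_div_mem_Icc {m : ℕ} {S x : ℝ} (hS₀ : 0 ≤ S) (hSm : S ≤ m)
    (hx₀ : 0 ≤ x) (hx₁ : x ≤ 1) :
    (S + x) ^ 2 / (m + 1) - S ^ 2 / m ∈ Set.Icc (x ^ 2 - 1) (x ^ 2) := by
  rcases Nat.eq_zero_or_pos m with rfl | hm
  · obtain rfl : S = 0 := le_antisymm (by simpa using hSm) hS₀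
    constructor <;> simp
  have hm' : (0 : ℝ) < m := by exact_mod_cast hm
  have key : (S + x) ^ 2 / (m + 1) - S ^ 2 / m = x ^ 2 - (S - m * x) ^ 2 / (m * (m + 1)) := by
    field_simp
    ring
  -- `|S - m x| ≤ m`, as `S` and `m x` both lie in `[0, m]`
  have hcorr : (S - m * x) ^ 2 / (m * (m + 1)) ≤ 1 := by
    rw [div_le_one (by positivity)]
    nlinarith [mul_nonneg (show (0 : ℝ) ≤ m - S + m * x by nlinarith)
      (show (0 : ℝ) ≤ m + S - m * x by nlinarith)]
  rw [key]
  constructor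
  · linarith
  · linarith [div_nonneg (sq_nonneg (S - m * x)) (by positivity : (0 : ℝ) ≤ m * (m + 1))]

section BetweenGroups

variable {ι κ : Type*}

noncomputable def sqSumDivCard (s : Finset ι) (y : ι → ℝ) : ℝ :=
  (∑ j ∈ s, y j) ^ 2 / #s

lemma sqSumDivCard_sub_erase_mem_Icc [DecidableEq ι] {s : Finset ι} {y : ι → ℝ} {j : ι}
    (hj : j ∈ s) (hy : ∀ i ∈ s, y i ∈ Set.Icc (0 : ℝ) 1) :
    sqSumDivCard s y - sqSumDivCard (s.erase j) y ∈ Set.Icc (y j ^ 2 - 1) (y j ^ 2) := by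
  have hsum := Finset.sum_erase_add s y hj
  have hcard : (#s : ℝ) = #(s.erase j) + 1 := by
    rw [← Finset.card_erase_add_one hj]; push_cast; ring
  have hle : ∑ i ∈ s.erase j, y i ≤ #(s.erase j) := by
    simpa using Finset.sum_le_card_nsmul _ y 1 fun i hi => (hy i (Finset.mem_of_mem_erase hi)).2
  unfold sqSumDivCard
  rw [← hsum, hcard]
  exact sq_div_succ_sub_sq_div_mem_Icc
    (Finset.sum_nonneg fun i hi => (hy i (Finset.mem_of_mem_erase hi)).1) hle (hy j hj).1 (hy j hj).2

variable [Fintype κ] [DecidableEq κ]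

/-- The between-group sum of squares `∑ᵢ nᵢ (ȳᵢ - ȳ)²` of the rows `s`, in the form
`∑ᵢ (∑_{s_i} y)² / nᵢ - (∑_s y)² / #s`. -/
noncomputable def betweenSS (s : Finset ι) (g : ι → κ) (y : ι → ℝ) : ℝ :=
  ∑ i, sqSumDivCard (s.filter (g · = i)) y - sqSumDivCard s y

lemma betweenSS_congr {s : Finset ι} {g g' : ι → κ} {y y' : ι → ℝ}
    (hg : ∀ j ∈ s, g j = g' j) (hy : ∀ j ∈ s, y j = y' j) :
    betweenSS s g y = betweenSS s g' y' := by
  have hfilter : ∀ i, s.filter (g · = i) = s.filter (g' · = i) := fun i =>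
    Finset.filter_congr fun j hj => by rw [hg j hj]
  have hq : ∀ t ⊆ s, sqSumDivCard t y = sqSumDivCard t y' := fun t ht => by
    unfold sqSumDivCard
    rw [Finset.sum_congr rfl fun j hj => hy j (ht hj)]
  simp only [betweenSS, hfilter, hq s subset_rfl, hq _ (Finset.filter_subset _ s)]

lemma betweenSS_sub_erase [DecidableEq ι] {s : Finset ι} {g : ι → κ} {y : ι → ℝ} {j : ι} :
    betweenSS s g y - betweenSS (s.erase j) g y =
      (sqSumDivCard (s.filter (g · = g j)) y - sqSumDivCard ((s.filter (g · = g j)).erase j) y)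
        - (sqSumDivCard s y - sqSumDivCard (s.erase j) y) := by
  have hfilter : ∀ i, (s.erase j).filter (g · = i) = (s.filter (g · = i)).erase j := fun i =>
    Finset.filter_erase _ _ _
  have hother : ∀ i ≠ g j, (s.filter (g · = i)).erase j = s.filter (g · = i) := fun i hi =>
    Finset.erase_eq_of_notMem fun hmem => hi (Finset.mem_filter.mp hmem).2.symm
  have hgroups : ∑ i, sqSumDivCard (s.filter (g · = i)) y
      - ∑ i, sqSumDivCard ((s.filter (g · = i)).erase j) y =
      sqSumDivCard (s.filter (g · = g j)) y - sqSumDivCard ((s.filter (g · = g j)).erase j) y := by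
    rw [← Finset.sum_sub_distrib, Finset.sum_eq_single (g j)]
    · intro i _ hi
      rw [hother i hi, sub_self]
    · exact fun h => absurd (Finset.mem_univ _) h
  simp only [betweenSS, hfilter]
  linarith

lemma abs_betweenSS_sub_erase_le_one [DecidableEq ι] {s : Finset ι} {g : ι → κ} {y : ι → ℝ}
    {j : ι} (hj : j ∈ s) (hy : ∀ i ∈ s, y i ∈ Set.Icc (0 : ℝ) 1) :
    |betweenSS s g y - betweenSS (s.erase j) g y| ≤ 1 := by
  have hgroup := sqSumDivCard_sub_erase_mem_Icc (s := s.filter (g · = g j))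
    (Finset.mem_filter.mpr ⟨hj, rfl⟩) fun i hi => hy i (Finset.mem_of_mem_filter i hi)
  have hall := sqSumDivCard_sub_erase_mem_Icc hj hy
  rw [betweenSS_sub_erase, abs_le]
  constructor <;> linarith [hgroup.1, hgroup.2, hall.1, hall.2]

end BetweenGroups

lemma card_mul_sq_mean_sub {ι : Type*} (t : Finset ι) (y : ι → ℝ) (c : ℝ) :
    (#t : ℝ) * ((∑ j ∈ t, y j) / #t - c) ^ 2 =
      sqSumDivCard t y - 2 * c * ∑ j ∈ t, y j + #t * c ^ 2 := by
  rcases t.eq_empty_or_nonempty with rfl | ht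
  · simp [sqSumDivCard]
  have : (#t : ℝ) ≠ 0 := by exact_mod_cast ht.card_ne_zero
  unfold sqSumDivCard
  field_simp
  ring

lemma SSA_eq_betweenSS {n k : ℕ} (D : Fin n → Fin k × ℝ) :
    SSA D = betweenSS univ (fun j => (D j).1) (fun j => (D j).2) := by
  have hsum := Finset.sum_fiberwise univ (fun j => (D j).1) (fun j => (D j).2)
  have hcard := Finset.card_eq_sum_card_fiberwise (s := univ) (t := univ) (f := fun j => (D j).1)
    fun _ _ => mem_univ _
  simp only [SSA, groupMean, groupSize, grandMean, card_mul_sq_mean_sub, betweenSS,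
    Finset.sum_add_distrib, Finset.sum_sub_distrib, ← Finset.mul_sum, ← Finset.sum_mul, hsum]
  rw [← Nat.cast_sum, ← hcard, sqSumDivCard, card_univ, Fintype.card_fin]
  rcases Nat.eq_zero_or_pos n with rfl | hn
  · simp
  have : (n : ℝ) ≠ 0 := by positivity
  field_simp
  ring

theorem SSA_sensitivity {n k : ℕ} (D D' : Fin n → Fin k × ℝ)
    (hD : ∀ j, (D j).2 ∈ Set.Icc (0 : ℝ) 1) (hD' : ∀ j, (D' j).2 ∈ Set.Icc (0 : ℝ) 1)
    (hneighbor : Neighboring D D') :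
    |SSA D - SSA D'| ≤ 9 + 5 / n := by
  obtain ⟨r, hr⟩ := hneighbor
  set B := fun E : Fin n → Fin k × ℝ =>
    betweenSS (univ.erase r) (fun j => (E j).1) (fun j => (E j).2)
  have hremove : ∀ E : Fin n → Fin k × ℝ, (∀ j, (E j).2 ∈ Set.Icc (0 : ℝ) 1) →
      |SSA E - B E| ≤ 1 := fun E hE => by
    rw [SSA_eq_betweenSS]
    exact abs_betweenSS_sub_erase_le_one (mem_univ r) fun j _ => hE j
  have hrest : B D = B D' := by
    have hagree : ∀ j ∈ univ.erase r, D j = D' j := fun j hj => hr j (ne_of_mem_erase hj)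
    exact betweenSS_congr (fun j hj => by rw [hagree j hj]) (fun j hj => by rw [hagree j hj])
  calc |SSA D - SSA D'| ≤ |SSA D - B D| + |B D' - SSA D'| := by
        rw [hrest]; exact abs_sub_le _ _ _
    _ ≤ 1 + 1 := by
        rw [abs_sub_comm (B D')]; exact add_le_add (hremove D hD) (hremove D' hD')
    _ ≤ 9 + 5 / n := by linarith [show (0 : ℝ) ≤ 5 / n by positivity]
end

section
/- With the same setup, if the changed row stays within the same group (only its value in [0,1] changes), then |SSE(D) - SSE(D')| ≤ 4. -/
open Finset

/- Since the row stays in its group, all groups coincide and only the group `s` of the changed row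
has a different sum of squared deviations. Writing that sum as `∑ y² - (∑ y)² / #s`, the change
factors as `(a - b) * ((a + b) - (S + S') / #s)`, where `a, b` are the old and new value and
`S, S'` the old and new group totals; both `a + b` and `(S + S') / #s` lie in `[0, 2]`. -/

namespace Finset

variable {α : Type*}

noncomputable def centeredSumSq (s : Finset α) (y : α → ℝ) : ℝ :=
  ∑ j ∈ s, (y j - (∑ j ∈ s, y j) / #s) ^ 2

theorem centeredSumSq_congr {s : Finset α} {y y' : α → ℝ} (h : ∀ j ∈ s, y j = y' j) :
    centeredSumSq s y = centeredSumSq s y' :=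
  sum_congr rfl fun j hj => by rw [h j hj, sum_congr rfl h]

theorem centeredSumSq_eq_sum_sq_sub (s : Finset α) (y : α → ℝ) :
    centeredSumSq s y = ∑ j ∈ s, y j ^ 2 - (∑ j ∈ s, y j) ^ 2 / #s := by
  rcases s.eq_empty_or_nonempty with rfl | hs
  · simp [centeredSumSq]
  have hcard : (#s : ℝ) ≠ 0 := by positivity
  simp only [centeredSumSq, sub_sq, sum_add_distrib, sum_sub_distrib, sum_const, nsmul_eq_mul,
    ← sum_mul, ← mul_sum]
  field_simp
  ring

theorem sum_sub_sum_eq_of_eqOn_erase [DecidableEq α] {s : Finset α} {r : α} (hr : r ∈ s)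
    {f g : α → ℝ} (h : ∀ j ∈ s, j ≠ r → f j = g j) :
    ∑ j ∈ s, f j - ∑ j ∈ s, g j = f r - g r := by
  rw [← sum_sub_distrib, sum_eq_single_of_mem r hr]
  exact fun j hj hjr => by rw [h j hj hjr, sub_self]

theorem sum_mem_Icc_card {s : Finset α} {y : α → ℝ} (hy : ∀ j ∈ s, y j ∈ Set.Icc 0 1) :
    ∑ j ∈ s, y j ∈ Set.Icc 0 (#s : ℝ) := by
  constructor
  · exact sum_nonneg fun j hj => (hy j hj).1
  · simpa using sum_le_sum fun j hj => (hy j hj).2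

theorem abs_centeredSumSq_sub_le [DecidableEq α] {s : Finset α} {r : α} (hr : r ∈ s)
    {y y' : α → ℝ} (hy : ∀ j ∈ s, y j ∈ Set.Icc 0 1) (hy' : ∀ j ∈ s, y' j ∈ Set.Icc 0 1)
    (h : ∀ j ∈ s, j ≠ r → y j = y' j) :
    |centeredSumSq s y - centeredSumSq s y'| ≤ 2 := by
  set a := y r
  set b := y' r
  set S := ∑ j ∈ s, y j
  set S' := ∑ j ∈ s, y' j
  have hcard : (0 : ℝ) < #s := by exact_mod_cast card_pos.2 ⟨r, hr⟩
  have hsq : ∑ j ∈ s, y j ^ 2 - ∑ j ∈ s, y' j ^ 2 = a ^ 2 - b ^ 2 :=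
    sum_sub_sum_eq_of_eqOn_erase hr fun j hj hjr => by rw [h j hj hjr]
  have hS : S - S' = a - b := sum_sub_sum_eq_of_eqOn_erase hr h
  have hfactor : centeredSumSq s y - centeredSumSq s y' = (a - b) * ((a + b) - (S + S') / #s) := by
    rw [centeredSumSq_eq_sum_sq_sub, centeredSumSq_eq_sum_sq_sub]
    field_simp
    linear_combination (#s : ℝ) * hsq - (S + S') * hS
  obtain ⟨ha0, ha1⟩ := hy r hr
  obtain ⟨hb0, hb1⟩ := hy' r hr
  obtain ⟨hS0, hS1⟩ := sum_mem_Icc_card hy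
  obtain ⟨hS'0, hS'1⟩ := sum_mem_Icc_card hy'
  have hmean : (S + S') / #s ∈ Set.Icc 0 2 :=
    ⟨by positivity, (div_le_iff₀ hcard).2 (by linarith)⟩
  rw [hfactor, abs_mul, ← one_mul 2]
  exact mul_le_mul (abs_le.2 ⟨by linarith, by linarith⟩)
    (abs_le.2 ⟨by linarith [hmean.2], by linarith [hmean.1]⟩) (abs_nonneg _) zero_le_one

end Finset

theorem SSE_eq_sum_centeredSumSq {n k : ℕ} (D : Fin n → Fin k × ℝ) :
    SSE D = ∑ i, centeredSumSq (univ.filter fun j => (D j).1 = i) fun j => (D j).2 :=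
  rfl

theorem SSE_sensitivity_same_group {n k : ℕ} (D D' : Fin n → Fin k × ℝ)
    (hD : ∀ j, (D j).2 ∈ Set.Icc (0 : ℝ) 1) (hD' : ∀ j, (D' j).2 ∈ Set.Icc (0 : ℝ) 1)
    (hneighbor : ∃ r, (D r).1 = (D' r).1 ∧ ∀ j, j ≠ r → D j = D' j) :
    |SSE D - SSE D'| ≤ 4 := by
  obtain ⟨r, hr, hoff⟩ := hneighbor
  have hlabel : ∀ j, (D' j).1 = (D j).1 := fun j =>
    if h : j = r then h ▸ hr.symm else congrArg Prod.fst (hoff j h).symm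
  have hvalue : ∀ j, j ≠ r → (D j).2 = (D' j).2 := fun j h => congrArg Prod.snd (hoff j h)
  simp only [SSE_eq_sum_centeredSumSq, hlabel, ← sum_sub_distrib]
  rw [sum_eq_single (D r).1 (fun i _ hi => ?_) (fun h => absurd (mem_univ _) h)]
  · have hr_mem : r ∈ univ.filter fun j => (D j).1 = (D r).1 := mem_filter.2 ⟨mem_univ r, rfl⟩
    have := abs_centeredSumSq_sub_le hr_mem (fun j _ => hD j) (fun j _ => hD' j)
      fun j _ hj => hvalue j hj
    linarith
  · refine sub_eq_zero.2 (centeredSumSq_congr fun j hj => hvalue j ?_)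
    rintro rfl
    exact hi (mem_filter.1 hj).2.symm
end

section
/- Let f : X → ℝ be a function on databases with sensitivity at most s > 0, i.e., |f(D) - f(D')| ≤ s for all neighboring D, D'. Let M(D) = f(D) + L where L ~ Lap(s/ε). Then for every measurable S ⊆ ℝ and neighboring D, D', Pr[M(D) ∈ S] ≤ e^ε · Pr[M(D') ∈ S]. -/
/-!
Shifting the Laplace law by `a` gives the density `x ↦ e^{-|x-a|/b}/(2b)`. By the triangle
inequality the densities centred at `a` and `a'` differ pointwise by a factor of at most
`e^{|a-a'|/b}`, and this is at most `e^ε` when `|a - a'| ≤ s` and `b = s/ε`.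
-/

open MeasureTheory

/-- The Laplace distribution with scale `b`, as a measure on `ℝ`. -/
noncomputable def laplaceMeasure (b : ℝ) : Measure ℝ :=
  volume.withDensity (fun x => ENNReal.ofReal (Real.exp (-|x| / b) / (2 * b)))

theorem MeasureTheory.Measure.map_const_add_withDensity {G : Type*} [MeasurableSpace G]
    [AddGroup G] [MeasurableAdd G] (μ : Measure G) [μ.IsAddLeftInvariant]
    (g : G → ENNReal) (a : G) :
    (μ.withDensity g).map (a + ·) = μ.withDensity (fun x => g (-a + x)) := by
  ext S hS
  rw [Measure.map_apply (measurable_const_add a) hS, withDensity_apply _ hS,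
    withDensity_apply _ (measurable_const_add a hS),
    ← (measurePreserving_add_left μ a).setLIntegral_comp_preimage_emb
      (measurableEmbedding_addLeft a) (fun x => g (-a + x)) S]
  simp only [neg_add_cancel_left]

theorem Real.exp_neg_abs_sub_div_le {b : ℝ} (hb : 0 < b) (x a a' : ℝ) :
    Real.exp (-|x - a| / b) ≤ Real.exp (|a - a'| / b) * Real.exp (-|x - a'| / b) := by
  rw [← Real.exp_add, Real.exp_le_exp, neg_div, neg_div, ← sub_eq_add_neg,
    neg_le_sub_iff_le_add, ← add_div, div_le_div_iff_of_pos_right hb]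
  calc |x - a'| = |(x - a) + (a - a')| := by rw [sub_add_sub_cancel]
    _ ≤ |x - a| + |a - a'| := abs_add_le _ _
    _ = |a - a'| + |x - a| := add_comm _ _

theorem laplaceMeasure_map_const_add_le {b : ℝ} (hb : 0 < b) (a a' : ℝ) :
    (laplaceMeasure b).map (a + ·)
      ≤ ENNReal.ofReal (Real.exp (|a - a'| / b)) • (laplaceMeasure b).map (a' + ·) := by
  rw [laplaceMeasure, Measure.map_const_add_withDensity, Measure.map_const_add_withDensity,
    ← withDensity_smul' _ _ ENNReal.ofReal_ne_top]
  refine withDensity_mono (ae_of_all _ fun x => ?_)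
  simp only [Pi.smul_apply, smul_eq_mul, neg_add_eq_sub]
  rw [← ENNReal.ofReal_mul (Real.exp_nonneg _), ← mul_div_assoc]
  gcongr
  exact Real.exp_neg_abs_sub_div_le hb x a a'

theorem laplace_mechanism {X : Type*} (Neighboring : X → X → Prop)
    (f : X → ℝ) (s ε : ℝ) (hs : 0 < s) (hε : 0 < ε)
    (hsens : ∀ D D', Neighboring D D' → |f D - f D'| ≤ s)
    (M : X → Measure ℝ)
    (hM : ∀ D, M D = (laplaceMeasure (s / ε)).map (fun x => f D + x)) :
    ∀ D D', Neighboring D D' → ∀ S : Set ℝ, MeasurableSet S →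
      M D S ≤ ENNReal.ofReal (Real.exp ε) * M D' S := by
  intro D D' hN S _
  have hb : 0 < s / ε := div_pos hs hε
  have hexp : |f D - f D'| / (s / ε) ≤ ε := by
    rw [div_le_iff₀ hb, mul_div_cancel₀ _ hε.ne']
    exact hsens D D' hN
  calc M D S ≤ ENNReal.ofReal (Real.exp (|f D - f D'| / (s / ε))) * M D' S := by
        rw [hM, hM]
        exact laplaceMeasure_map_const_add_le hb (f D) (f D') S
    _ ≤ ENNReal.ofReal (Real.exp ε) * M D' S := by gcongr
end
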